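/- arXiv:1406.5240 — 3 statements merged into one kernel-verified Lean document; each statement's English description precedes it below -/
import Mathlib

section
/- Let b be the upper shift matrix and b^t the lower shift matrix in n×n matrices over ℂ[λ], and J = λ·e_{n1} + b. Then for every 1 ≤ i ≤ n−1, J^i = λ·(b^t)^{n−i} + b^i. -/
open Matrix Polynomial

/-! Right multiplication by `J` moves column `q - 1` to column `q`, and column `n - 1`, multiplied
by `λ`, to column `0`. Hence for every `k ≤ n` the entries of `J ^ k` are
`[p + k = q] + λ [q + (n - k) = p]`, which are those of `b ^ k + λ (bᵀ) ^ (n - k)`. -/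

section ShiftMatrix

variable (R : Type*) [Semiring R] (n : ℕ)

def shiftMatrix : Matrix (Fin n) (Fin n) R :=
  of fun i j => if (i : ℕ) + 1 = j then 1 else 0

variable {R n}

theorem mul_shiftMatrix_apply (M : Matrix (Fin n) (Fin n) R) (p q : Fin n) :
    (M * shiftMatrix R n) p q = if h : (q : ℕ) = 0 then 0 else M p ⟨q - 1, by omega⟩ := by
  rw [mul_apply]
  split_ifs with hq
  · exact Finset.sum_eq_zero fun r _ => by simp [shiftMatrix, hq]
  · rw [Finset.sum_eq_single ⟨q - 1, by omega⟩]
    · simp [shiftMatrix]; omega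
    · intro r _ hr
      simp only [shiftMatrix, of_apply, mul_ite, mul_one, mul_zero, ite_eq_right_iff]
      intro h
      exact absurd (Fin.ext (by simp; omega)) hr
    · simp

theorem shiftMatrix_pow_apply (k : ℕ) (p q : Fin n) :
    (shiftMatrix R n ^ k) p q = if (p : ℕ) + k = q then 1 else 0 := by
  induction k generalizing q with
  | zero => simp [one_apply, Fin.ext_iff]
  | succ k ih =>
    rw [pow_succ, mul_shiftMatrix_apply]
    split_ifs <;> simp_all <;> omega

end ShiftMatrix

section CyclicShift

variable {R : Type*} [CommSemiring R] {n : ℕ}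

theorem shiftMatrix_transpose_pow_apply (k : ℕ) (p q : Fin n) :
    ((shiftMatrix R n)ᵀ ^ k) p q = if (q : ℕ) + k = p then 1 else 0 := by
  rw [← transpose_pow, transpose_apply, shiftMatrix_pow_apply]

def cyclicShift (hn : 0 < n) (c : R) : Matrix (Fin n) (Fin n) R :=
  single ⟨n - 1, Nat.sub_lt hn Nat.one_pos⟩ ⟨0, hn⟩ c + shiftMatrix R n

theorem mul_cyclicShift_apply (hn : 0 < n) (c : R) (M : Matrix (Fin n) (Fin n) R) (p q : Fin n) :
    (M * cyclicShift hn c) p q =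
      if (q : ℕ) = 0 then M p ⟨n - 1, Nat.sub_lt hn Nat.one_pos⟩ * c else M p ⟨q - 1, by omega⟩ := by
  rw [cyclicShift, mul_add, Matrix.add_apply, mul_shiftMatrix_apply]
  by_cases hq : (q : ℕ) = 0
  · obtain rfl : q = ⟨0, hn⟩ := Fin.ext hq
    simp
  · rw [mul_single_apply_of_ne _ _ _ _ _ (by simpa [Fin.ext_iff] using hq)]
    simp [hq]

theorem cyclicShift_pow_apply (hn : 0 < n) (c : R) {k : ℕ} (hk : k ≤ n) (p q : Fin n) :
    (cyclicShift hn c ^ k) p q =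
      (if (p : ℕ) + k = q then 1 else 0) + c * if (q : ℕ) + (n - k) = p then 1 else 0 := by
  induction k generalizing q with
  | zero => simp [one_apply, Fin.ext_iff, show ¬(q : ℕ) + n = p by omega]
  | succ k ih =>
    rw [pow_succ, mul_cyclicShift_apply]
    split_ifs with hq <;> rw [ih (by omega)] <;> dsimp only <;> split_ifs <;> first | ring1 | (exfalso; omega)

end CyclicShift

theorem stmt1 (n : ℕ) (hn : 0 < n)
    (b bt J : Matrix (Fin n) (Fin n) (Polynomial ℂ))
    (hb : b = Matrix.of fun i j : Fin n => if (i : ℕ) + 1 = (j : ℕ) then 1 else 0)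
    (hbt : bt = Matrix.of fun i j : Fin n => if (j : ℕ) + 1 = (i : ℕ) then 1 else 0)
    (hJ : J = (X : Polynomial ℂ) • Matrix.single (⟨n - 1, by omega⟩ : Fin n) (⟨0, hn⟩ : Fin n) (1 : Polynomial ℂ) + b) :
    ∀ i : ℕ, 1 ≤ i → i ≤ n - 1 → J ^ i = (X : Polynomial ℂ) • bt ^ (n - i) + b ^ i := by
  have hb' : b = shiftMatrix ℂ[X] n := hb
  have hbt' : bt = (shiftMatrix ℂ[X] n)ᵀ := hbt
  have hJ' : J = cyclicShift hn X := by rw [hJ, smul_single, smul_eq_mul, mul_one, hb']; rfl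
  intro i _ hi
  refine Matrix.ext fun p q => ?_
  rw [hJ', cyclicShift_pow_apply hn X (by omega), Matrix.add_apply, Matrix.smul_apply, hbt', hb',
    shiftMatrix_transpose_pow_apply, shiftMatrix_pow_apply, smul_eq_mul, add_comm]
end

section
/- Let Λ = Σ_{k=1}^{n−1} ((1−α^k)/(1−α)) e_{k+1,k} with α = e^{2πi/n}, and b the upper shift matrix. Then the set {Λ^i (b)^{n−1} Λ^j : 0 ≤ i, j ≤ n−1} spans gl(n,ℂ) (and after removing one element with trace, is a basis of sl(n,ℂ) in the appropriate sense), and {Λ^i b^{n−1} Λ^j : i, j ≥ 0, i + j < n−1} is a basis of the strictly upper triangular matrices N_+. -/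
/-!
The corner unit `b ^ (n - 1) = E₀,ₙ₋₁` is moved by the weighted lower shift `Λ`: left
multiplication by `Λ` pushes a matrix unit one row down and right multiplication one column to
the left, each time picking up a weight `(1 - α ^ t) / (1 - α)` with `0 < t < n`, which is nonzero
because `α` is a primitive `n`-th root of unity. Hence `Λ ^ i b ^ (n - 1) Λ ^ j` is a nonzero
multiple of `Eᵢ,ₙ₋₁₋ⱼ`: the whole family is the basis of matrix units up to nonzero scalars, and
the pairs with `i + j < n - 1` are exactly the units strictly above the diagonal.
-/

open Matrix

theorem IsPrimitiveRoot.one_sub_pow_div_one_sub_ne_zero {K : Type*} [Field K] {ζ : K} {n : ℕ}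
    (hζ : IsPrimitiveRoot ζ n) (hn : 2 ≤ n) {t : ℕ} (ht : 0 < t) (htn : t < n) :
    (1 - ζ ^ t) / (1 - ζ) ≠ 0 := by
  refine div_ne_zero (sub_ne_zero.2 (hζ.pow_ne_one_of_pos_of_lt ht.ne' htn).symm)
    (sub_ne_zero.2 ?_)
  simpa using (hζ.pow_ne_one_of_pos_of_lt one_ne_zero (by omega)).symm

namespace Matrix

section Shifts

variable {R : Type*} {n : ℕ}

def upperShift [Zero R] [One R] : Matrix (Fin n) (Fin n) R :=
  of fun i j => if (i : ℕ) + 1 = j then 1 else 0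

def subdiagonal [Zero R] (w : ℕ → R) : Matrix (Fin n) (Fin n) R :=
  of fun i j => if (i : ℕ) = j + 1 then w i else 0

theorem upperShift_pow [Semiring R] (k : ℕ) :
    (upperShift ^ k : Matrix (Fin n) (Fin n) R) =
      of fun i j : Fin n => if (i : ℕ) + k = j then 1 else 0 := by
  induction k with
  | zero => ext i j; simp [one_apply, Fin.ext_iff]
  | succ k ih =>
    ext i j
    rw [pow_succ, mul_apply, ih]
    simp only [upperShift, of_apply]
    rw [Fin.sum_univ_eq_sum_range
      (fun m => (if (i : ℕ) + k = m then (1 : R) else 0) * if m + 1 = (j : ℕ) then 1 else 0)]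
    simp only [ite_mul, one_mul, zero_mul, Finset.sum_ite_eq, Finset.mem_range]
    have := j.isLt
    split_ifs <;> first | rfl | omega

theorem upperShift_pow_sub_one [Semiring R] (hn : n ≠ 0) :
    (upperShift ^ (n - 1) : Matrix (Fin n) (Fin n) R) =
      single ⟨0, by omega⟩ ⟨n - 1, by omega⟩ 1 := by
  ext i j
  simp only [upperShift_pow, of_apply, single, Fin.ext_iff]
  have := i.isLt
  have := j.isLt
  split_ifs <;> first | rfl | omega

variable [CommSemiring R] (w : ℕ → R)

theorem subdiagonal_mul_single (a c : Fin n) (x : R) (h : (a : ℕ) + 1 < n) :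
    subdiagonal w * single a c x = single ⟨a + 1, h⟩ c (w (a + 1) * x) := by
  ext k l
  rw [mul_apply, Finset.sum_eq_single a
    (fun m _ hm => by rw [single_apply_of_row_ne (Ne.symm hm), mul_zero])
    (fun h => (h (Finset.mem_univ _)).elim)]
  simp only [subdiagonal, single, of_apply, Fin.ext_iff, true_and]
  split_ifs <;> grind

theorem single_mul_subdiagonal (a c : Fin n) (x : R) (h : 0 < (c : ℕ)) :
    single a c x * subdiagonal w = single a ⟨c - 1, by omega⟩ (x * w c) := by
  ext k l
  rw [mul_apply, Finset.sum_eq_single c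
    (fun m _ hm => by rw [single_apply_of_col_ne _ _ hm.symm, zero_mul])
    (fun h => (h (Finset.mem_univ _)).elim)]
  simp only [subdiagonal, single, of_apply, Fin.ext_iff, and_true]
  split_ifs <;> grind

theorem subdiagonal_pow_mul_single (a c : Fin n) (x : R) (i : ℕ) (h : (a : ℕ) + i < n) :
    subdiagonal w ^ i * single a c x =
      single ⟨a + i, h⟩ c ((∏ t ∈ Finset.range i, w (a + t + 1)) * x) := by
  induction i with
  | zero => simp
  | succ i ih =>
    rw [pow_succ', mul_assoc, ih (by omega), subdiagonal_mul_single w _ _ _ (by simp; omega),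
      Finset.prod_range_succ]
    congr 1
    ring

theorem single_mul_subdiagonal_pow (a c : Fin n) (x : R) (j : ℕ) (h : j ≤ c) :
    single a c x * subdiagonal w ^ j =
      single a ⟨c - j, by omega⟩ (x * ∏ t ∈ Finset.range j, w (c - t)) := by
  induction j with
  | zero => simp
  | succ j ih =>
    rw [pow_succ, ← mul_assoc, ih (by omega), single_mul_subdiagonal w _ _ _ (by simp; omega),
      Finset.prod_range_succ]
    congr 1
    ring

theorem subdiagonal_pow_mul_upperShift_pow_mul_subdiagonal_pow {i j : ℕ} (hi : i < n)
    (hj : j < n) :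
    subdiagonal w ^ i * upperShift ^ (n - 1) * subdiagonal w ^ j =
      single ⟨i, hi⟩ ⟨n - 1 - j, by omega⟩
        ((∏ t ∈ Finset.range i, w (t + 1)) * ∏ t ∈ Finset.range j, w (n - 1 - t)) := by
  rw [upperShift_pow_sub_one (by omega), subdiagonal_pow_mul_single w _ _ _ _ (by simpa),
    single_mul_subdiagonal_pow w _ _ _ _ (by simp; omega)]
  simp

theorem exists_subdiagonal_pow_mul_upperShift_pow_mul_subdiagonal_pow_eq_single
    [NoZeroDivisors R] [Nontrivial R] (hw : ∀ t, 0 < t → t < n → w t ≠ 0) {i j : ℕ}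
    (hi : i < n) (hj : j < n) :
    ∃ c ≠ 0, subdiagonal w ^ i * upperShift ^ (n - 1) * subdiagonal w ^ j =
      single ⟨i, hi⟩ ⟨n - 1 - j, by omega⟩ c := by
  refine ⟨_, mul_ne_zero ?_ ?_, subdiagonal_pow_mul_upperShift_pow_mul_subdiagonal_pow w hi hj⟩
  all_goals
    refine Finset.prod_ne_zero_iff.mpr fun t ht => hw _ ?_ ?_ <;> simp at ht <;> omega

end Shifts

section Span

variable {K m n ι : Type*} [Field K] [Fintype m] [Fintype n] [DecidableEq m] [DecidableEq n]

theorem mem_span_of_forall_single_mem {S : Set (Matrix m n K)} {P : m → n → Prop}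
    (hS : ∀ k l, P k l → ∃ c ≠ 0, single k l c ∈ S) {M : Matrix m n K}
    (hM : ∀ k l, ¬P k l → M k l = 0) : M ∈ Submodule.span K S := by
  rw [matrix_eq_sum_single M]
  refine Submodule.sum_mem _ fun k _ => Submodule.sum_mem _ fun l _ => ?_
  by_cases hkl : P k l
  · obtain ⟨c, hc, hmem⟩ := hS k l hkl
    have : single k l (M k l) = (M k l * c⁻¹) • single k l c := by
      rw [smul_single, smul_eq_mul, inv_mul_cancel_right₀ hc]
    exact this ▸ Submodule.smul_mem _ _ (Submodule.subset_span hmem)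
  · simp [hM k l hkl]

theorem linearIndependent_single_of_injective (r : ι → m) (s : ι → n)
    (hrs : Function.Injective fun p => (r p, s p)) (c : ι → K) (hc : ∀ p, c p ≠ 0) :
    LinearIndependent K fun p => single (r p) (s p) (c p) := by
  convert ((stdBasis K m n).linearIndependent.comp _ hrs).units_smul
    fun p => Units.mk0 (c p) (hc p) with p
  simp [stdBasis_eq_single, smul_single]

end Span

end Matrix

theorem stmt14 (n : ℕ) (hn : 2 ≤ n)
    (α : ℂ) (hα : α = Complex.exp (2 * Real.pi * Complex.I / n))
    (b Λ : Matrix (Fin n) (Fin n) ℂ)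
    (hb : b = Matrix.of fun i j : Fin n => if (i : ℕ) + 1 = (j : ℕ) then 1 else 0)
    (hΛ : Λ = Matrix.of fun i j : Fin n =>
        if (i : ℕ) = (j : ℕ) + 1 then (1 - α ^ (i : ℕ)) / (1 - α) else 0)
    (U : Submodule ℂ (Matrix (Fin n) (Fin n) ℂ))
    (hU : ∀ m, m ∈ U ↔ ∀ k l : Fin n, ¬ ((k : ℕ) < (l : ℕ)) → m k l = 0) :
    Submodule.span ℂ
        {m | ∃ i j : ℕ, i ≤ n - 1 ∧ j ≤ n - 1 ∧ m = Λ ^ i * b ^ (n - 1) * Λ ^ j} = ⊤ ∧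
    LinearIndependent ℂ
      (fun p : {p : ℕ × ℕ // p.1 + p.2 < n - 1} =>
        Λ ^ p.1.1 * b ^ (n - 1) * Λ ^ p.1.2) ∧
    Submodule.span ℂ
      (Set.range fun p : {p : ℕ × ℕ // p.1 + p.2 < n - 1} =>
        Λ ^ p.1.1 * b ^ (n - 1) * Λ ^ p.1.2) = U := by
  have hα' : IsPrimitiveRoot α n := hα ▸ Complex.isPrimitiveRoot_exp n (by omega)
  have key {i j : ℕ} (hi : i < n) (hj : j < n) : ∃ c ≠ 0,
      Λ ^ i * b ^ (n - 1) * Λ ^ j = single ⟨i, hi⟩ ⟨n - 1 - j, by omega⟩ c := by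
    subst hb hΛ
    exact exists_subdiagonal_pow_mul_upperShift_pow_mul_subdiagonal_pow_eq_single _
      (fun _ => hα'.one_sub_pow_div_one_sub_ne_zero hn) hi hj
  have single_eq (k l : Fin n) :
      ∃ c ≠ 0, single k l c = Λ ^ (k : ℕ) * b ^ (n - 1) * Λ ^ (n - 1 - l) := by
    obtain ⟨c, hc, h⟩ := key k.isLt (j := n - 1 - l) (by omega)
    exact ⟨c, hc, h ▸ by congr; ext; simp; omega⟩
  refine ⟨?_, ?_, ?_⟩
  · refine eq_top_iff.2 fun M _ => mem_span_of_forall_single_mem (P := fun _ _ => True)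
      (fun k l _ => ?_) (by simp)
    obtain ⟨c, hc, h⟩ := single_eq k l
    exact ⟨c, hc, k, n - 1 - l, by omega, by omega, h⟩
  · choose c hc h using fun p : {p : ℕ × ℕ // p.1 + p.2 < n - 1} =>
      key (i := p.1.1) (j := p.1.2) (by omega) (by omega)
    rw [funext h]
    refine linearIndependent_single_of_injective _ _ ?_ c hc
    rintro ⟨⟨i, j⟩, hij⟩ ⟨⟨i', j'⟩, hij'⟩ h
    simp only [Prod.mk.injEq, Fin.mk.injEq] at h
    simp only [Subtype.mk.injEq, Prod.mk.injEq]
    omega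
  · refine le_antisymm (Submodule.span_le.2 ?_) fun M hM =>
      mem_span_of_forall_single_mem (P := fun k l : Fin n => (k : ℕ) < l) (fun k l hkl => ?_)
        ((hU M).1 hM)
    · rintro _ ⟨⟨⟨i, j⟩, hij⟩, rfl⟩
      obtain ⟨c, -, h⟩ := key (i := i) (j := j) (by omega) (by omega)
      change _ * _ * _ ∈ U
      rw [h, hU]
      intro k l hkl
      rw [single_apply_of_ne]
      rintro ⟨rfl, rfl⟩
      exact (hkl (by simp only at hij ⊢; omega)).elim
    · obtain ⟨c, hc, h⟩ := single_eq k l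
      exact ⟨c, hc, ⟨(k, n - 1 - l), by omega⟩, h.symm⟩
end

section
/- Let S(·) be the map from pseudodifferential-operator symbols to matrices defined by S(σ) = Σ_{j=0}^{n−1} (σ^{(j)}/j!)·C^j for a scalar function σ, where C = Σ_{k=1}^{n−1} k·e_{k+1,k} and σ^{(j)} = ∂_x^j σ. Then S is multiplicative on products of functions: S(στ) = S(σ)S(τ) for smooth scalar functions σ, τ. -/
lemma diff_iter {σ : ℝ → ℂ} (hσ : ContDiff ℝ (⊤ : ℕ∞) σ) (k : ℕ) :
    Differentiable ℝ (iteratedDeriv k σ) := by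
  rw [iteratedDeriv_eq_iterate]
  have h' : ContDiff ℝ ((⊤ : ℕ∞) : WithTop ℕ∞) σ := hσ.of_le (by simp)
  exact (h'.iterate_deriv k).differentiable (by simp)

lemma leibniz {σ τ : ℝ → ℂ} (hσ : ContDiff ℝ (⊤ : ℕ∞) σ) (hτ : ContDiff ℝ (⊤ : ℕ∞) τ) :
    ∀ m, iteratedDeriv m (fun t => σ t * τ t) = fun x =>
      ∑ k ∈ Finset.range (m + 1),
        (m.choose k : ℂ) * (iteratedDeriv k σ x * iteratedDeriv (m - k) τ x)
  | 0 => by funext x; simp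
  | (m + 1) => by
    rw [iteratedDeriv_succ, leibniz hσ hτ m]
    funext x
    have hdiff : ∀ k : ℕ, DifferentiableAt ℝ
        (fun x => (m.choose k : ℂ) * (iteratedDeriv k σ x * iteratedDeriv (m - k) τ x)) x :=
      fun k => (((diff_iter hσ k x).mul (diff_iter hτ (m - k) x)).const_mul _)
    rw [deriv_fun_sum (fun k _ => hdiff k)]
    have hder : ∀ k : ℕ,
        deriv (fun x => (m.choose k : ℂ) * (iteratedDeriv k σ x * iteratedDeriv (m - k) τ x)) x
        = (m.choose k : ℂ) * (iteratedDeriv (k + 1) σ x * iteratedDeriv (m - k) τ x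
            + iteratedDeriv k σ x * iteratedDeriv (m - k + 1) τ x) := by
      intro k
      rw [deriv_const_mul (d := fun y => iteratedDeriv k σ y * iteratedDeriv (m - k) τ y) _ ((diff_iter hσ k x).mul (diff_iter hτ (m - k) x)),
        deriv_fun_mul (diff_iter hσ k x) (diff_iter hτ (m - k) x),
        iteratedDeriv_succ, iteratedDeriv_succ]
    simp only [hder]
    -- now pure algebra
    set f : ℕ → ℂ := fun k => iteratedDeriv k σ x with hf
    set g : ℕ → ℂ := fun k => iteratedDeriv k τ x with hg
    have key : ∑ k ∈ Finset.range (m + 1),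
        (m.choose k : ℂ) * (f (k + 1) * g (m - k) + f k * g (m - k + 1))
        = ∑ k ∈ Finset.range (m + 1 + 1), ((m + 1).choose k : ℂ) * (f k * g (m + 1 - k)) := by
      rw [Finset.sum_range_succ' (fun k => ((m + 1).choose k : ℂ) * (f k * g (m + 1 - k)))]
      simp only [mul_add, Finset.sum_add_distrib]
      have e1 : ∀ k ∈ Finset.range (m + 1),
          ((m + 1).choose (k + 1) : ℂ) * (f (k + 1) * g (m + 1 - (k + 1)))
          = (m.choose k : ℂ) * (f (k + 1) * g (m - k))
            + (m.choose (k + 1) : ℂ) * (f (k + 1) * g (m - k)) := by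
        intro k hk
        have : m + 1 - (k + 1) = m - k := by omega
        rw [this, Nat.choose_succ_succ, Nat.cast_add, add_mul]
      rw [Finset.sum_congr rfl e1, Finset.sum_add_distrib]
      have e3 : ∑ k ∈ Finset.range (m + 1), (m.choose (k + 1) : ℂ) * (f (k + 1) * g (m - k))
          = ∑ k ∈ Finset.range m, (m.choose (k + 1) : ℂ) * (f (k + 1) * g (m - k)) := by
        rw [Finset.sum_range_succ, Nat.choose_succ_self, Nat.cast_zero, zero_mul, add_zero]
      have e2 : ∑ k ∈ Finset.range (m + 1), (m.choose k : ℂ) * (f k * g (m - k + 1))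
          = ∑ k ∈ Finset.range (m + 1), (m.choose (k + 1) : ℂ) * (f (k + 1) * g (m - k))
            + ((m + 1).choose 0 : ℂ) * (f 0 * g (m + 1 - 0)) := by
        rw [Finset.sum_range_succ' (fun k => (m.choose k : ℂ) * (f k * g (m - k + 1)))]
        simp only [Nat.choose_zero_right, Nat.cast_one, Nat.sub_zero]
        rw [e3]
        congr 1
        apply Finset.sum_congr rfl
        intro k hk
        simp only [Finset.mem_range] at hk
        have : m - (k + 1) + 1 = m - k := by omega
        rw [this]
      rw [e2]
      ring
    exact key

open Matrix

lemma pow_entry_zero {n : ℕ} {Cm : Matrix (Fin n) (Fin n) ℂ}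
    (hC : Cm = Matrix.of fun i j : Fin n => if (i : ℕ) = (j : ℕ) + 1 then ((i : ℕ) : ℂ) else 0) :
    ∀ k : ℕ, ∀ i j : Fin n, (i : ℕ) < (j : ℕ) + k → (Cm ^ k) i j = 0
  | 0 => by
    intro i j hij
    simp only [pow_zero]
    rw [Matrix.one_apply_ne]
    intro h; rw [h] at hij; omega
  | (k + 1) => by
    intro i j hij
    rw [pow_succ, Matrix.mul_apply]
    apply Finset.sum_eq_zero
    intro l _
    by_cases hl : (l : ℕ) = (j : ℕ) + 1
    · have : (Cm ^ k) i l = 0 := pow_entry_zero hC k i l (by omega)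
      rw [this, zero_mul]
    · have : Cm l j = 0 := by rw [hC]; simp [Matrix.of_apply, hl]
      rw [this, mul_zero]

lemma pow_eq_zero_of_ge {n : ℕ} {Cm : Matrix (Fin n) (Fin n) ℂ}
    (hC : Cm = Matrix.of fun i j : Fin n => if (i : ℕ) = (j : ℕ) + 1 then ((i : ℕ) : ℂ) else 0)
    {m : ℕ} (hm : n ≤ m) : Cm ^ m = 0 := by
  ext i j
  rw [Matrix.zero_apply]
  exact pow_entry_zero hC m i j (by have := i.isLt; omega)

theorem stmt19 (n : ℕ) (hn : 0 < n)
    (Cm : Matrix (Fin n) (Fin n) ℂ)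
    (hC : Cm = Matrix.of fun i j : Fin n => if (i : ℕ) = (j : ℕ) + 1 then ((i : ℕ) : ℂ) else 0)
    (σ τ : ℝ → ℂ) (hσ : ContDiff ℝ (⊤ : ℕ∞) σ) (hτ : ContDiff ℝ (⊤ : ℕ∞) τ)
    (S : (ℝ → ℂ) → ℝ → Matrix (Fin n) (Fin n) ℂ)
    (hS : ∀ f x, S f x = ∑ j ∈ Finset.range n,
        (iteratedDeriv j f x / (j.factorial : ℂ)) • Cm ^ j) :
    ∀ x, S (fun t => σ t * τ t) x = S σ x * S τ x := by
  intro x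
  rw [hS, hS, hS]
  set T : ℕ → ℕ → Matrix (Fin n) (Fin n) ℂ := fun a b =>
    ((iteratedDeriv a σ x / (a.factorial : ℂ)) * (iteratedDeriv b τ x / (b.factorial : ℂ)))
      • Cm ^ (a + b) with hT
  have lhs_eq : ∑ j ∈ Finset.range n,
      (iteratedDeriv j (fun t => σ t * τ t) x / (j.factorial : ℂ)) • Cm ^ j
      = ∑ m ∈ Finset.range n, ∑ k ∈ Finset.range (m + 1), T k (m - k) := by
    apply Finset.sum_congr rfl
    intro m _
    rw [leibniz hσ hτ m]
    rw [Finset.sum_div, Finset.sum_smul]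
    apply Finset.sum_congr rfl
    intro k hk
    simp only [Finset.mem_range] at hk
    have hkm : k ≤ m := by omega
    have hadd : k + (m - k) = m := by omega
    rw [hT]
    simp only
    rw [hadd]
    congr 1
    have hfact : (m.choose k : ℂ) * (k.factorial : ℂ) * ((m - k).factorial : ℂ)
        = (m.factorial : ℂ) := by
      rw [← Nat.cast_mul, ← Nat.cast_mul, Nat.choose_mul_factorial_mul_factorial hkm]
    have h1 : (k.factorial : ℂ) ≠ 0 := Nat.cast_ne_zero.mpr k.factorial_ne_zero
    have h2 : ((m - k).factorial : ℂ) ≠ 0 := Nat.cast_ne_zero.mpr (m - k).factorial_ne_zero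
    have h3 : (m.factorial : ℂ) ≠ 0 := Nat.cast_ne_zero.mpr m.factorial_ne_zero
    have h0 : (m.choose k : ℂ) ≠ 0 := Nat.cast_ne_zero.mpr (Nat.choose_pos hkm).ne'
    rw [← hfact]
    field_simp
  rw [lhs_eq, Finset.sum_mul_sum]
  have rhs_eq : ∀ j ∈ Finset.range n, ∀ k ∈ Finset.range n,
      ((iteratedDeriv j σ x / (j.factorial : ℂ)) • Cm ^ j) *
        ((iteratedDeriv k τ x / (k.factorial : ℂ)) • Cm ^ k) = T j k := by
    intro j _ k _
    rw [hT]
    simp only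
    rw [smul_mul_smul_comm, ← pow_add]
  rw [Finset.sum_congr rfl fun j hj => Finset.sum_congr rfl fun k hk => rhs_eq j hj k hk]
  -- RHS: restrict inner sum
  have rhs_trunc : ∑ j ∈ Finset.range n, ∑ k ∈ Finset.range n, T j k
      = ∑ j ∈ Finset.range n, ∑ k ∈ Finset.range (n - j), T j k := by
    apply Finset.sum_congr rfl
    intro j hj
    simp only [Finset.mem_range] at hj
    symm
    apply Finset.sum_subset
    · intro k hk; simp only [Finset.mem_range] at *; omega
    · intro k _ hk
      simp only [Finset.mem_range] at hk
      rw [hT]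
      simp only
      rw [pow_eq_zero_of_ge hC (by omega), smul_zero]
  rw [rhs_trunc]
  rw [Finset.sum_sigma', Finset.sum_sigma']
  apply Finset.sum_nbij' (fun p => ⟨p.2, p.1 - p.2⟩) (fun p => ⟨p.1 + p.2, p.1⟩)
  · rintro ⟨m, k⟩ hp
    simp only [Finset.mem_sigma, Finset.mem_range] at *
    omega
  · rintro ⟨j, k⟩ hp
    simp only [Finset.mem_sigma, Finset.mem_range] at *
    omega
  · rintro ⟨m, k⟩ hp
    simp only [Finset.mem_sigma, Finset.mem_range] at hp
    have h : k + (m - k) = m := by omega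
    simp [h]
  · rintro ⟨j, k⟩ hp
    simp only [Finset.mem_sigma, Finset.mem_range] at hp
    have h : j + k - j = k := by omega
    simp [h]
  · rintro ⟨m, k⟩ hp
    simp only [Finset.mem_sigma, Finset.mem_range] at hp
    rfl
end
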